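/- arXiv:2208.03087 — 2 statements merged into one kernel-verified Lean document; each statement's English description precedes it below -/
import Mathlib

section
/- Let L be a complete lattice and define the precision order on L × L by (x, y) ≤ₚ (x', y') iff x ≤ x' and y' ≤ y. Let A : L × L → L × L be ≤ₚ-monotone, and define the stable revision operator St_A(u, v) = ( lfp(z ↦ (A(z, v)).1), lfp(z ↦ (A(u, z)).2) ), where lfp denotes the least fixpoint of a monotone operator on L (which exists by the Knaster–Tarski theorem, since both projection operators z ↦ (A(z, v)).1 and z ↦ (A(u, z)).2 are ≤-monotone on L). Then St_A is ≤ₚ-monotone: if (u, v) ≤ₚ (u', v') then St_A(u, v) ≤ₚ St_A(u', v'). -/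
/-- The precision order on `L × L`: `(x, y) ≤ₚ (x', y')` iff `x ≤ x'` and `y' ≤ y`. -/
def precLE {L : Type*} [CompleteLattice L] (p q : L × L) : Prop :=
  p.1 ≤ q.1 ∧ q.2 ≤ p.2

/-- The least fixpoint of an operator on a complete lattice, given by the Knaster–Tarski
construction (for a monotone operator this is its least fixpoint). -/
def lfpSet {L : Type*} [CompleteLattice L] (f : L → L) : L :=
  sInf {x | f x ≤ x}

/-- The stable revision operator
`St_A(u, v) = ( lfp(z ↦ (A(z, v)).1), lfp(z ↦ (A(u, z)).2) )`. -/
def stableRevision {L : Type*} [CompleteLattice L] (A : L × L → L × L) (p : L × L) : L × L :=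
  (lfpSet (fun z => (A (z, p.2)).1), lfpSet (fun z => (A (p.1, z)).2))

/-- If `A` is `≤ₚ`-monotone then the stable revision operator `St_A` is `≤ₚ`-monotone:
`(u, v) ≤ₚ (u', v')` implies `St_A(u, v) ≤ₚ St_A(u', v')`. -/
theorem stableRevision_monotone {L : Type*} [CompleteLattice L]
    (A : L × L → L × L) (hA : ∀ p q : L × L, precLE p q → precLE (A p) (A q)) :
    ∀ p q : L × L, precLE p q → precLE (stableRevision A p) (stableRevision A q) := by
  have lfp_mono : ∀ f g : L → L, (∀ x, f x ≤ g x) → lfpSet f ≤ lfpSet g := fun f g h =>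
    sInf_le_sInf (fun x hx => le_trans (h x) hx)
  rintro ⟨u, v⟩ ⟨u', v'⟩ ⟨hu, hv⟩
  constructor
  · exact lfp_mono _ _ (fun z => (hA (z, v) (z, v') ⟨le_rfl, hv⟩).1)
  · exact lfp_mono _ _ (fun z => (hA (u, z) (u', z) ⟨hu, le_rfl⟩).2)
end

section
/- Let 𝒫 be a program over a type α of ground atoms and let (T, P) be a partition of KA(𝒫). Then the set of head-cuts H^(T,P)_𝒫 is empty if and only if some rule of 𝒫 is not satisfied by (T, P) under the three-valued evaluation. (This is the combinatorial content of the lemma: the three-valued evaluation of each rule under any MKNF interpretation inducing (T, P) depends only on (T, P), so H^(T,P)_𝒫 is empty iff every MKNF interpretation inducing (T, P) fails to satisfy the program.) -/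
attribute [local instance] Classical.propDecidable

/-- A (disjunctive) rule over a type `α` of ground atoms: a nonempty finite head and
finite positive/negative bodies. -/
structure DRule (α : Type*) where
  head : Finset α
  head_nonempty : head.Nonempty
  bodyP : Finset α
  bodyN : Finset α

/-- `KA(Prog)`: the atoms occurring in heads or bodies of rules of the program. -/
def KA {α : Type*} (Prog : Set (DRule α)) : Set α :=
  {a | ∃ r ∈ Prog, a ∈ r.head ∨ a ∈ r.bodyP ∨ a ∈ r.bodyN}

/-- Truth values `f < u < t` encoded as `0 < 1 < 2` in `Fin 3`.
The value of an atom w.r.t. a partition `(T, P)`: `t` if `a ∈ T`, `u` if `a ∈ P \ T`,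
and `f` otherwise. -/
noncomputable def tval {α : Type*} (T P : Set α) (a : α) : Fin 3 :=
  if a ∈ T then 2 else if a ∈ P then 1 else 0

/-- Three-valued negation: `¬t = f`, `¬u = u`, `¬f = t`. -/
def tneg (v : Fin 3) : Fin 3 :=
  if v = 0 then 2 else if v = 2 then 0 else 1

/-- A rule `r` is satisfied by `(T, P)` if
`max_{h ∈ head(r)} val(h) ≥ min( min_{a ∈ body⁺(r)} val(a), min_{a ∈ body⁻(r)} ¬val(a) )`
(with `min ∅ = t`, `max ∅ = f`; heads are nonempty). -/
noncomputable def ruleSat {α : Type*} (T P : Set α) (r : DRule α) : Prop :=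
  r.bodyP.inf (tval T P) ⊓ r.bodyN.inf (fun a => tneg (tval T P a)) ≤ r.head.sup (tval T P)

/-- A head-cut of a program `Prog`: a set of pairs `(r, h)` with `r ∈ Prog` and
`h ∈ head(r)`, containing at most one pair for each rule. -/
def IsHeadCut {α : Type*} (Prog : Set (DRule α)) (R : Set (DRule α × α)) : Prop :=
  (∀ p ∈ R, p.1 ∈ Prog ∧ p.2 ∈ p.1.head) ∧
  (∀ p ∈ R, ∀ q ∈ R, p.1 = q.1 → p = q)

/-- Membership in `H^(T,P)_Prog`: a head-cut `R` such that
(i) a rule `r ∈ Prog` is in `rule(R)` iff `body⁺(r) ⊆ P`, `body⁻(r) ∩ T = ∅`, and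
(`head(r) ∩ T = ∅` or (`body⁺(r) ⊆ T` and `body⁻(r) ∩ P = ∅`)), and
(ii) for every `(r, h) ∈ R`: `h ∈ P`, and `h ∈ T` iff
(`body⁺(r) ⊆ T` and `body⁻(r) ∩ P = ∅`). -/
def InH {α : Type*} (Prog : Set (DRule α)) (T P : Set α) (R : Set (DRule α × α)) : Prop :=
  IsHeadCut Prog R ∧
  (∀ r ∈ Prog, (∃ h, (r, h) ∈ R) ↔
    (↑r.bodyP ⊆ P ∧ (∀ a ∈ r.bodyN, a ∉ T) ∧
      ((∀ h ∈ r.head, h ∉ T) ∨ (↑r.bodyP ⊆ T ∧ ∀ a ∈ r.bodyN, a ∉ P)))) ∧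
  (∀ p ∈ R, p.2 ∈ P ∧ (p.2 ∈ T ↔ (↑p.1.bodyP ⊆ T ∧ ∀ a ∈ p.1.bodyN, a ∉ P)))

section Aux
variable {α : Type*} {T P : Set α}

lemma fin3_pos_le {x : Fin 3} (h : (0:Fin 3) < x) : (1:Fin 3) ≤ x := by
  rw [Fin.lt_def] at h; rw [Fin.le_def]
  have e0 : ((0:Fin 3)).val = 0 := rfl
  have e1 : ((1:Fin 3)).val = 1 := rfl
  omega

lemma fin3_not_two_lt {x : Fin 3} : ¬ (2:Fin 3) < x := by
  rw [Fin.lt_def]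
  have := x.isLt
  have e2 : ((2:Fin 3)).val = 2 := rfl
  omega

lemma fin3_lt_cases {x y : Fin 3} (h : x < y) (h2 : ¬ (2:Fin 3) ≤ y) : ¬ (1:Fin 3) ≤ x := by
  rw [Fin.lt_def] at h; rw [Fin.le_def] at h2 ⊢
  have e1 : ((1:Fin 3)).val = 1 := rfl
  have e2 : ((2:Fin 3)).val = 2 := rfl
  omega

lemma one_le_tval_iff (hTP : T ⊆ P) {a : α} : (1:Fin 3) ≤ tval T P a ↔ a ∈ P := by
  unfold tval; split_ifs with h1 h2
  · simpa using hTP h1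
  · simpa using h2
  · simp [h2]

lemma two_le_tval_iff {a : α} : (2:Fin 3) ≤ tval T P a ↔ a ∈ T := by
  unfold tval; split_ifs with h1 h2 <;> simp [h1]

lemma one_le_tneg_iff {a : α} : (1:Fin 3) ≤ tneg (tval T P a) ↔ a ∉ T := by
  unfold tval tneg; split_ifs <;> simp_all

lemma two_le_tneg_iff (hTP : T ⊆ P) {a : α} : (2:Fin 3) ≤ tneg (tval T P a) ↔ a ∉ P := by
  unfold tval tneg; split_ifs with h1 <;> simp_all
  · exact hTP h1

lemma one_le_bval_iff (hTP : T ⊆ P) (r : DRule α) :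
    (1:Fin 3) ≤ r.bodyP.inf (tval T P) ⊓ r.bodyN.inf (fun a => tneg (tval T P a)) ↔
      (↑r.bodyP ⊆ P ∧ ∀ a ∈ r.bodyN, a ∉ T) := by
  rw [le_inf_iff, Finset.le_inf_iff, Finset.le_inf_iff]
  constructor
  · rintro ⟨h1, h2⟩
    exact ⟨fun a ha => (one_le_tval_iff hTP).mp (h1 a ha),
      fun a ha => one_le_tneg_iff.mp (h2 a ha)⟩
  · rintro ⟨h1, h2⟩
    exact ⟨fun a ha => (one_le_tval_iff hTP).mpr (h1 ha),
      fun a ha => one_le_tneg_iff.mpr (h2 a ha)⟩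

lemma two_le_bval_iff (hTP : T ⊆ P) (r : DRule α) :
    (2:Fin 3) ≤ r.bodyP.inf (tval T P) ⊓ r.bodyN.inf (fun a => tneg (tval T P a)) ↔
      (↑r.bodyP ⊆ T ∧ ∀ a ∈ r.bodyN, a ∉ P) := by
  rw [le_inf_iff, Finset.le_inf_iff, Finset.le_inf_iff]
  constructor
  · rintro ⟨h1, h2⟩
    exact ⟨fun a ha => two_le_tval_iff.mp (h1 a ha),
      fun a ha => (two_le_tneg_iff hTP).mp (h2 a ha)⟩
  · rintro ⟨h1, h2⟩
    exact ⟨fun a ha => two_le_tval_iff.mpr (h1 ha),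
      fun a ha => (two_le_tneg_iff hTP).mpr (h2 a ha)⟩

lemma one_le_hsup_iff (r : DRule α) :
    (1:Fin 3) ≤ r.head.sup (tval T P) ↔ ∃ h ∈ r.head, h ∈ P ∨ h ∈ T := by
  rw [Finset.le_sup_iff (by decide : (⊥:Fin 3) < 1)]
  constructor
  · rintro ⟨h, hh, hle⟩
    refine ⟨h, hh, ?_⟩
    unfold tval at hle; split_ifs at hle <;> simp_all
  · rintro ⟨h, hh, hp⟩
    refine ⟨h, hh, ?_⟩
    unfold tval; split_ifs <;> simp_all

lemma two_le_hsup_iff (r : DRule α) :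
    (2:Fin 3) ≤ r.head.sup (tval T P) ↔ ∃ h ∈ r.head, h ∈ T := by
  rw [Finset.le_sup_iff (by decide : (⊥:Fin 3) < 2)]
  constructor
  · rintro ⟨h, hh, hle⟩
    exact ⟨h, hh, two_le_tval_iff.mp hle⟩
  · rintro ⟨h, hh, ht⟩
    exact ⟨h, hh, two_le_tval_iff.mpr ht⟩

end Aux

/-- `H^(T,P)_Prog` is empty iff some rule of `Prog` is not satisfied by `(T, P)` under
the three-valued evaluation. -/
theorem H_empty_iff_rule_unsat {α : Type*} (Prog : Set (DRule α)) (hfin : Prog.Finite)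
    (T P : Set α) (hTP : T ⊆ P) (hKA : P ⊆ KA Prog) :
    (¬ ∃ R : Set (DRule α × α), InH Prog T P R) ↔ ∃ r ∈ Prog, ¬ ruleSat T P r := by
  set C : DRule α → Prop := fun r =>
    (↑r.bodyP ⊆ P ∧ (∀ a ∈ r.bodyN, a ∉ T) ∧
      ((∀ h ∈ r.head, h ∉ T) ∨ (↑r.bodyP ⊆ T ∧ ∀ a ∈ r.bodyN, a ∉ P))) with hC
  set D : DRule α → Prop := fun r => (↑r.bodyP ⊆ T ∧ ∀ a ∈ r.bodyN, a ∉ P) with hD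
  constructor
  · intro hne
    by_contra hsat
    push_neg at hsat
    apply hne
    have hchoice : ∀ r : DRule α, ∃ h : α, r ∈ Prog → C r →
        (h ∈ r.head ∧ h ∈ P ∧ (h ∈ T ↔ D r)) := by
      intro r
      by_cases hr : r ∈ Prog ∧ C r
      · obtain ⟨hrP, hrC⟩ := hr
        have hs : ruleSat T P r := hsat r hrP
        by_cases hd : D r
        · -- body value is 2, so some head atom is in T
          have h2 : (2:Fin 3) ≤ r.head.sup (tval T P) :=
            le_trans ((two_le_bval_iff hTP r).mpr hd) hs
          obtain ⟨h, hh, ht⟩ := (two_le_hsup_iff r).mp h2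
          exact ⟨h, fun _ _ => ⟨hh, hTP ht, iff_of_true ht hd⟩⟩
        · -- body value ≥ 1, head ∩ T = ∅
          have hhc : ∀ h ∈ r.head, h ∉ T := by
            rcases hrC.2.2 with h | h
            · exact h
            · exact absurd h hd
          have h1 : (1:Fin 3) ≤ r.head.sup (tval T P) :=
            le_trans ((one_le_bval_iff hTP r).mpr ⟨hrC.1, hrC.2.1⟩) hs
          obtain ⟨h, hh, hp⟩ := (one_le_hsup_iff r).mp h1
          have hp' : h ∈ P := hp.elim id (fun ht => hTP ht)
          exact ⟨h, fun _ _ => ⟨hh, hp', iff_of_false (hhc h hh) hd⟩⟩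
      · exact ⟨r.head_nonempty.choose, fun h1 h2 => absurd ⟨h1, h2⟩ hr⟩
    choose f hf using hchoice
    refine ⟨{p : DRule α × α | p.1 ∈ Prog ∧ C p.1 ∧ p.2 = f p.1}, ?_, ?_, ?_⟩
    · constructor
      · rintro ⟨r, h⟩ ⟨h1, h2, h3⟩
        exact ⟨h1, h3 ▸ (hf r h1 h2).1⟩
      · rintro ⟨r, h⟩ ⟨h1, h2, h3⟩ ⟨r', h'⟩ ⟨h1', h2', h3'⟩ heq
        simp only at heq
        subst heq
        rw [Prod.ext_iff]
        exact ⟨rfl, h3.trans h3'.symm⟩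
    · intro r hr
      constructor
      · rintro ⟨h, _, h2, _⟩
        exact h2
      · intro hCr
        exact ⟨f r, hr, hCr, rfl⟩
    · rintro ⟨r, h⟩ ⟨h1, h2, h3⟩
      obtain ⟨_, hp, ht⟩ := hf r h1 h2
      exact ⟨h3 ▸ hp, h3 ▸ ht⟩
  · rintro ⟨r, hr, hunsat⟩ ⟨R, hcut, hmem, hatom⟩
    rw [ruleSat, not_le] at hunsat
    set b := r.bodyP.inf (tval T P) ⊓ r.bodyN.inf (fun a => tneg (tval T P a)) with hb
    have hb1 : (1:Fin 3) ≤ b := fin3_pos_le (lt_of_le_of_lt (Fin.zero_le _) hunsat)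
    by_cases h2b : (2:Fin 3) ≤ b
    · have hd : D r := (two_le_bval_iff hTP r).mp h2b
      have hCr : C r := ⟨fun a ha => hTP (hd.1 ha), fun a ha hat => hd.2 a ha (hTP hat),
        Or.inr hd⟩
      obtain ⟨h, hR⟩ := (hmem r hr).mpr hCr
      have hhead : h ∈ r.head := ((hcut.1 _ hR).2 : h ∈ r.head)
      have hT : h ∈ T := ((hatom _ hR).2).mpr hd
      have hs2 : (2:Fin 3) ≤ r.head.sup (tval T P) := (two_le_hsup_iff r).mpr ⟨h, hhead, hT⟩
      exact fin3_not_two_lt (lt_of_le_of_lt hs2 hunsat)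
    · have hsup0 : ¬ (1:Fin 3) ≤ r.head.sup (tval T P) := fin3_lt_cases hunsat h2b
      have hb1' := (one_le_bval_iff hTP r).mp hb1
      have hCr : C r := ⟨hb1'.1, hb1'.2, Or.inl (fun h hh hT =>
        hsup0 (le_trans (by decide) ((two_le_hsup_iff r).mpr ⟨h, hh, hT⟩)))⟩
      obtain ⟨h, hR⟩ := (hmem r hr).mpr hCr
      have hhead : h ∈ r.head := ((hcut.1 _ hR).2 : h ∈ r.head)
      have hP : h ∈ P := (hatom _ hR).1
      exact hsup0 ((one_le_hsup_iff r).mpr ⟨h, hhead, Or.inl hP⟩)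
end
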